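/- arXiv:2103.03298 — 5 statements merged into one kernel-verified Lean document; each statement's English description precedes it below -/
import Mathlib

section
/- Let a ∈ {7, 11, 19, 43, 67, 163} and let n be a positive integer. Suppose x, y, z are integers with gcd(x,y) = 1 satisfying a·x^2 + y^{2n} = 4z^3. Then there exist odd integers u, v with gcd(u,v) = 1 and u·v ≠ 0 such that 4x = v(3u^2 − a·v^2), 4y^n = u(u^2 − 3a·v^2), and 4z = u^2 + a·v^2. -/
/-!
Put `k = (a + 1) / 4` and `𝒪 = ℤ[ω]` with `ω² = ω - k`, the ring of integers of `ℚ(√-a)`.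

`𝒪` is a principal ideal domain. In a nonzero ideal `I` take `α` of least norm and `β` of least
norm among the elements independent of `α`; rounding Cramer coordinates shows that `α, β` is a
`ℤ`-basis of `I`. Writing `ω α = c₁ α + c β`, reducedness gives `3 c² ≤ a` and `c I ⊆ (α)`, so `I`
is principal once the ideal `{δ | α δ ∈ c I}` is. That ideal contains `c`, and every prime
`p ≤ √(a / 3)` is inert (`X² - X + k` has no root mod `p`), which forces it to be generated by an
integer.

With `Y = yⁿ`, the parities mod 4 make `x` and `Y` odd, and `α = (Y + x √-a) / 2 ∈ 𝒪` has norm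
`z³` and is coprime to its conjugate. Since the units are `±1`, `α = β³` with
`β = (u + v √-a) / 2`, and expanding the cube gives the three identities.
-/

theorem Int.exists_eq_mul_add_two_mul_abs_le (Y E : ℤ) (hE : E ≠ 0) :
    ∃ q r : ℤ, Y = q * E + r ∧ 2 * |r| ≤ |E| := by
  have hm : 0 < E.natAbs := Int.natAbs_pos.mpr hE
  refine ⟨Y.bdiv E.natAbs * E.sign, Y.bmod E.natAbs, ?_, ?_⟩
  · conv_lhs => rw [← Int.bdiv_add_bmod Y E.natAbs]
    rw [Int.natCast_natAbs, ← Int.sign_mul_self_eq_abs]; ring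
  · have h1 := Int.le_bmod (x := Y) hm
    have h2 := Int.bmod_le (x := Y) hm
    rw [Int.natCast_natAbs] at h1 h2
    rcases abs_cases (Y.bmod E.natAbs) with ⟨h, -⟩ | ⟨h, -⟩ <;> omega

theorem Ideal.isPrincipal_of_natCast_mem {R : Type*} [CommRing R] {J : Ideal R} {m : ℕ}
    (hm : 0 < m) (hmJ : (m : R) ∈ J)
    (hmax : ∀ p : ℕ, p.Prime → p ∣ m → (Ideal.span {(p : R)}).IsMaximal) :
    J.IsPrincipal := by
  induction m using Nat.strong_induction_on generalizing J with
  | _ m ih =>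
  obtain rfl | hm1 := (Nat.one_le_iff_ne_zero.mpr hm.ne').eq_or_lt
  · rw [J.eq_top_of_isUnit_mem hmJ (by simp)]
    infer_instance
  set p := m.minFac
  have hp : p.Prime := Nat.minFac_prime hm1.ne'
  have hpm : p ∣ m := Nat.minFac_dvd m
  have hlt : m / p < m := Nat.div_lt_self hm hp.one_lt
  have hpos : 0 < m / p := Nat.div_pos (Nat.minFac_le hm) hp.pos
  have hdvd : ∀ q : ℕ, q.Prime → q ∣ m / p → (Ideal.span {(q : R)}).IsMaximal :=
    fun q hq hqd => hmax q hq (hqd.trans (Nat.div_dvd_of_dvd hpm))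
  have hcast : (p : R) * ((m / p : ℕ) : R) = m := by rw [← Nat.cast_mul, Nat.mul_div_cancel' hpm]
  by_cases hJp : J ≤ Ideal.span {(p : R)}
  · -- `J = p J'` where `J' = J : p` contains `m / p`
    obtain ⟨g, hg⟩ := ih (m / p) hlt (J := J.colon {(p : R)}) hpos
      (by rw [Submodule.mem_colon_singleton, smul_eq_mul, mul_comm, hcast]; exact hmJ) hdvd
    refine ⟨⟨p * g, le_antisymm (fun γ hγ => ?_) ?_⟩⟩
    · obtain ⟨δ, rfl⟩ := Ideal.mem_span_singleton'.mp (hJp hγ)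
      have : δ ∈ J.colon {(p : R)} := by
        rwa [Submodule.mem_colon_singleton, smul_eq_mul]
      obtain ⟨σ, rfl⟩ := Ideal.mem_span_singleton'.mp (hg ▸ this)
      exact Ideal.mem_span_singleton'.mpr ⟨σ, by ring⟩
    · have : g ∈ J.colon {(p : R)} := hg ▸ Ideal.mem_span_singleton_self g
      rw [Submodule.mem_colon_singleton, smul_eq_mul, mul_comm] at this
      simpa [Ideal.submodule_span_eq, Ideal.span_singleton_le_iff_mem] using this
  · obtain ⟨u, huJ, hu⟩ := SetLike.not_le_iff_exists.mp hJp
    obtain ⟨y, i, hi, hyu⟩ := (hmax p hp hpm).exists_inv hu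
    obtain ⟨ρ, rfl⟩ := Ideal.mem_span_singleton'.mp hi
    refine ih (m / p) hlt hpos ?_ hdvd
    -- `m / p = (y u + ρ p) (m / p)` lies in `J`
    have : ((m / p : ℕ) : R) = ((m / p : ℕ) * y) * u + ρ * m := by
      rw [← hcast]; linear_combination (-(((m / p : ℕ) : R))) * hyu
    rw [this]
    exact J.add_mem (J.mul_mem_left _ huJ) (J.mul_mem_left _ hmJ)

theorem Ideal.isPrincipal_of_isPrincipal_colon {R : Type*} [CommRing R] [IsDomain R]
    {I : Ideal R} {α c : R} (hc : c ≠ 0) (hdvd : ∀ γ ∈ I, α ∣ c * γ)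
    (hJ : ((Ideal.span {c} * I).colon {α}).IsPrincipal) : I.IsPrincipal := by
  obtain ⟨g, hg⟩ := hJ
  have hmem : ∀ δ, δ ∈ (Ideal.span {c} * I).colon {α} ↔ ∃ ι ∈ I, c * ι = δ * α := fun δ => by
    rw [Submodule.mem_colon_singleton, smul_eq_mul, Ideal.mem_span_singleton_mul]
  obtain ⟨ι₀, hι₀I, hι₀⟩ := (hmem g).mp (hg ▸ Submodule.mem_span_singleton_self g)
  refine ⟨ι₀, le_antisymm (fun γ hγ => ?_) ((Ideal.span_singleton_le_iff_mem I).mpr hι₀I)⟩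
  obtain ⟨δ, hδ⟩ := hdvd γ hγ
  obtain ⟨σ, rfl⟩ := Submodule.mem_span_singleton.mp
    (hg ▸ (hmem δ).mpr ⟨γ, hγ, by rw [hδ, mul_comm]⟩)
  refine Submodule.mem_span_singleton.mpr ⟨σ, mul_left_cancel₀ hc ?_⟩
  rw [hδ, smul_eq_mul, mul_left_comm, hι₀]; ring

namespace QuadraticAlgebra

section CommRing

variable {R S : Type*} [CommRing R] [CommRing S] {a b : R}

def map (f : R →+* S) : QuadraticAlgebra R a b →+* QuadraticAlgebra S (f a) (f b) where
  toFun z := ⟨f z.re, f z.im⟩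
  map_one' := by ext <;> simp
  map_mul' z w := by ext <;> simp
  map_zero' := by ext <;> simp
  map_add' z w := by ext <;> simp

@[simp] theorem re_map (f : R →+* S) (z : QuadraticAlgebra R a b) : (map f z).re = f z.re := rfl
@[simp] theorem im_map (f : R →+* S) (z : QuadraticAlgebra R a b) : (map f z).im = f z.im := rfl

def det (z w : QuadraticAlgebra R a b) : R := z.re * w.im - z.im * w.re

theorem det_smul_eq (z w v : QuadraticAlgebra R a b) :
    det z w • v = det v w • z + det z v • w := by
  ext <;> simp only [det, re_add, im_add, re_smul, im_smul, smul_eq_mul] <;> ring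

theorem det_sub_smul_sub_smul (z w v : QuadraticAlgebra R a b) (r s : R) :
    det z (v - r • z - s • w) = det z v - s * det z w := by
  simp only [det, re_sub, im_sub, re_smul, im_smul, smul_eq_mul]; ring

theorem norm_add (z w : QuadraticAlgebra R a b) :
    norm (z + w) = norm z + trace (z * star w) + norm w := by
  simp only [norm_def, trace_def, re_add, im_add, re_mul, im_mul, re_star, im_star]; ring

theorem norm_sub (z w : QuadraticAlgebra R a b) :
    norm (z - w) = norm z - trace (z * star w) + norm w := by
  simp only [norm_def, trace_def, re_sub, im_sub, re_mul, im_mul, re_star, im_star]; ring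

theorem norm_smul_add_smul (r s : R) (z w : QuadraticAlgebra R a b) :
    norm (r • z + s • w) = r ^ 2 * norm z + r * s * trace (z * star w) + s ^ 2 * norm w := by
  simp only [norm_def, trace_def, re_add, im_add, re_smul, im_smul, re_mul, im_mul, re_star,
    im_star, smul_eq_mul]; ring

theorem norm_smul (r : R) (z : QuadraticAlgebra R a b) : norm (r • z) = r ^ 2 * norm z := by
  simp only [norm_def, re_smul, im_smul, smul_eq_mul]; ring

theorem isRelPrime_star {z : QuadraticAlgebra R a b}
    (h : IsCoprime (trace z) (z.im * norm (ω - star ω : QuadraticAlgebra R a b))) :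
    IsRelPrime z (star z) := by
  intro δ hz hz'
  have htr : norm δ ∣ trace z ^ 2 := by
    rw [← norm_algebraMap (a := a) (b := b), algebraMap_trace_eq_add_star]
    exact map_dvd norm (dvd_add hz hz')
  have hsub : norm δ ∣ z.im ^ 2 * norm (ω - star ω : QuadraticAlgebra R a b) := by
    rw [← norm_smul, ← sub_star]
    exact map_dvd norm (dvd_sub hz hz')
  exact isUnit_iff_norm_isUnit.mpr <| (h.pow (m := 2) (n := 2)).isUnit_of_dvd' htr
    (hsub.trans ⟨norm (ω - star ω : QuadraticAlgebra R a b), by ring⟩)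

end CommRing

theorem isMaximal_span_natCast {a b : ℤ} {p : ℕ} [Fact p.Prime]
    (h : ∀ r : ZMod p, r ^ 2 ≠ a + b * r) :
    (Ideal.span {(p : QuadraticAlgebra ℤ a b)}).IsMaximal := by
  -- makes `QuadraticAlgebra (ZMod p) a b` a field
  have : Fact (∀ r : ZMod p, r ^ 2 ≠ Int.castRingHom (ZMod p) a + Int.castRingHom (ZMod p) b * r) :=
    ⟨by simpa using h⟩
  let f := map (a := a) (b := b) (Int.castRingHom (ZMod p))
  have hsurj : Function.Surjective f := fun z =>
    ⟨⟨z.re.val, z.im.val⟩, by ext <;> simp only [f, re_map, im_map] <;> simp⟩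
  have hker : RingHom.ker f = Ideal.span {(p : QuadraticAlgebra ℤ a b)} := by
    ext z
    rw [RingHom.mem_ker, Ideal.mem_span_singleton, ← map_natCast (algebraMap ℤ _),
      algebraMap_dvd_iff]
    simp only [f, QuadraticAlgebra.ext_iff, re_map, im_map, re_zero, im_zero, eq_intCast,
      ZMod.intCast_zmod_eq_zero_iff_dvd]
  exact hker ▸ RingHom.ker_isMaximal_of_surjective f hsurj

section ImaginaryQuadratic

variable {k : ℤ}

local notation "𝒪" => QuadraticAlgebra ℤ (-k) 1

theorem four_mul_norm (z : 𝒪) :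
    4 * norm z = (2 * z.re + z.im) ^ 2 + (4 * k - 1) * z.im ^ 2 := by
  rw [norm_def]; ring

theorem four_mul_norm_mul_norm (z w : 𝒪) :
    4 * (norm z * norm w) = trace (z * star w) ^ 2 + (4 * k - 1) * det z w ^ 2 := by
  rw [← norm_star w, ← map_mul, four_mul_norm, trace_def]
  simp only [det, re_mul, im_mul, re_star, im_star]; ring

theorem det_omega_mul_self (z : 𝒪) : det z (ω * z) = norm z := by
  simp only [det, norm_def, re_mul, im_mul, omega_re, omega_im]; ring

theorem norm_nonneg (hk : 0 < k) (z : 𝒪) : 0 ≤ norm z := by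
  nlinarith [four_mul_norm z, sq_nonneg (2 * z.re + z.im), sq_nonneg z.im]

theorem norm_pos (hk : 0 < k) {z : 𝒪} (hz : z ≠ 0) : 0 < norm z := by
  refine (norm_nonneg hk z).lt_of_ne fun h => hz ?_
  have h4 := four_mul_norm z
  have him : z.im = 0 := by nlinarith [sq_nonneg (2 * z.re + z.im), sq_nonneg z.im]
  rw [him] at h4
  ext
  · rw [re_zero]; nlinarith
  · exact him

theorem isDomain (hk : 0 < k) : IsDomain 𝒪 :=
  @NoZeroDivisors.to_isDomain _ _ _ ⟨fun {z w} h => by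
    by_contra! hzw
    have := mul_pos (norm_pos hk hzw.1) (norm_pos hk hzw.2)
    rw [← map_mul, h, norm_zero] at this
    exact this.false⟩

theorem eq_one_or_eq_neg_one_of_isUnit (hk : 2 ≤ k) {u : 𝒪} (hu : IsUnit u) :
    u = 1 ∨ u = -1 := by
  have hnorm : norm u = 1 := by
    rcases Int.isUnit_iff.mp (isUnit_iff_norm_isUnit.mp hu) with h | h
    · exact h
    · linarith [norm_nonneg (by omega) u]
  have him : u.im = 0 := by
    nlinarith [four_mul_norm u, sq_nonneg (2 * u.re + u.im), sq_nonneg u.im]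
  have hre : u.re * u.re = 1 := by simpa [norm_def, him] using hnorm
  rcases mul_self_eq_one_iff.mp hre with h | h
  · left; ext <;> simp [h, him]
  · right; ext <;> simp [h, him]

theorem exists_norm_le (hk : 0 < k) {S : Set 𝒪} (hS : S.Nonempty) :
    ∃ α ∈ S, ∀ γ ∈ S, norm α ≤ norm γ := by
  let f : 𝒪 → ℕ := fun z => (norm z).toNat
  refine ⟨Function.argminOn f S hS, Function.argminOn_mem f S hS, fun γ hγ => ?_⟩
  have : (norm (Function.argminOn f S hS)).toNat ≤ (norm γ).toNat := Function.argminOn_le f S hγ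
  have := norm_nonneg hk γ
  have := norm_nonneg hk (Function.argminOn f S hS)
  omega

theorem abs_trace_mul_star_le {I : Ideal 𝒪} {α β : 𝒪} (hαI : α ∈ I) (hβI : β ∈ I)
    (hβ : det α β ≠ 0) (hβmin : ∀ γ ∈ I, det α γ ≠ 0 → norm β ≤ norm γ) :
    |trace (α * star β)| ≤ norm α := by
  have hadd := hβmin (α + β) (I.add_mem hαI hβI) (by
    convert hβ using 1; simp only [det, re_add, im_add]; ring)
  have hsub := hβmin (α - β) (I.sub_mem hαI hβI) (by
    rw [← neg_ne_zero]; convert hβ using 1; simp only [det, re_sub, im_sub]; ring)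
  rw [norm_add] at hadd
  rw [norm_sub] at hsub
  exact abs_le.mpr ⟨by linarith, by linarith⟩

theorem exists_eq_smul_add_smul (hk : 0 < k) {I : Ideal 𝒪} {α β : 𝒪} (hαI : α ∈ I)
    (hαmin : ∀ γ ∈ I, γ ≠ 0 → norm α ≤ norm γ) (hβI : β ∈ I) (hβ : det α β ≠ 0)
    (hβmin : ∀ γ ∈ I, det α γ ≠ 0 → norm β ≤ norm γ) {γ : 𝒪} (hγ : γ ∈ I) :
    ∃ X Y : ℤ, γ = X • α + Y • β := by
  -- Round the Cramer coordinates of `γ`; the remainder `γ'` would be a nonzero element of `I`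
  -- shorter than `α` (if `t = 0`) or than `β`.
  set E := det α β
  obtain ⟨q, r, hq, hr⟩ := Int.exists_eq_mul_add_two_mul_abs_le (det γ β) E hβ
  obtain ⟨s, t, hs, ht⟩ := Int.exists_eq_mul_add_two_mul_abs_le (det α γ) E hβ
  refine ⟨q, s, sub_eq_zero.mp (sub_sub γ _ _ ▸ ?_)⟩
  set γ' := γ - q • α - s • β
  by_contra hγ'
  have hγ'I : γ' ∈ I := I.sub_mem (I.sub_mem hγ (zsmul_mem hαI q)) (zsmul_mem hβI s)
  have hEγ' : E • γ' = r • α + t • β := by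
    have := det_smul_eq α β γ
    rw [hq, hs] at this
    simp only [γ', smul_sub]
    linear_combination (norm := module) this
  have hdet' : det α γ' = t := by rw [det_sub_smul_sub_smul]; linarith
  have hnorm : E ^ 2 * norm γ' = r ^ 2 * norm α + r * t * trace (α * star β) + t ^ 2 * norm β := by
    rw [← norm_smul, hEγ', norm_smul_add_smul]
  have hα : α ≠ 0 := by rintro rfl; simp [E, det] at hβ
  have hNα := norm_pos hk hα
  have hαβ : norm α ≤ norm β := hαmin β hβI (by rintro rfl; simp [E, det] at hβ)
  have hE : 0 < E ^ 2 := by positivity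
  have hr2 : 4 * r ^ 2 ≤ E ^ 2 := by nlinarith [sq_abs r, sq_abs E, abs_nonneg r]
  rcases eq_or_ne t 0 with rfl | ht0
  · have := hαmin γ' hγ'I hγ'
    nlinarith
  · have hT := abs_trace_mul_star_le hαI hβI hβ hβmin
    have := hβmin γ' hγ'I (hdet' ▸ ht0)
    have ht2 : 4 * t ^ 2 ≤ E ^ 2 := by nlinarith [sq_abs t, sq_abs E, abs_nonneg t]
    have hrt : 4 * (r * t * trace (α * star β)) ≤ E ^ 2 * norm α := by
      have h1 : 2 * |r| * (2 * |t|) ≤ |E| * |E| := mul_le_mul hr ht (by positivity) (abs_nonneg E)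
      have h2 : r * t * trace (α * star β) ≤ |r| * |t| * norm α := (le_abs_self _).trans (by
        rw [abs_mul, abs_mul]; exact mul_le_mul_of_nonneg_left hT (by positivity))
      nlinarith [abs_mul_abs_self E]
    nlinarith

theorem exists_forall_dvd_intCast_mul (hk : 0 < k) {I : Ideal 𝒪} (hI : I ≠ ⊥) :
    ∃ α ∈ I, ∃ c : ℤ, c ≠ 0 ∧ 3 * c ^ 2 ≤ 4 * k - 1 ∧ ∀ γ ∈ I, α ∣ c * γ := by
  obtain ⟨α, ⟨hαI, hα⟩, hαmin⟩ :=
    exists_norm_le hk (S := {γ | γ ∈ I ∧ γ ≠ 0}) (Submodule.exists_mem_ne_zero_of_ne_bot hI)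
  have hωα : ω * α ∈ I := I.mul_mem_left ω hαI
  have hNα := norm_pos hk hα
  obtain ⟨β, ⟨hβI, hβ⟩, hβmin⟩ := exists_norm_le hk (S := {γ | γ ∈ I ∧ det α γ ≠ 0})
    ⟨_, hωα, by rw [det_omega_mul_self]; exact hNα.ne'⟩
  have hbasis : ∀ γ ∈ I, ∃ X Y : ℤ, γ = X • α + Y • β := fun γ hγ =>
    exists_eq_smul_add_smul hk hαI (fun γ hγ hγ0 => hαmin γ ⟨hγ, hγ0⟩) hβI hβ
      (fun γ hγ hγ0 => hβmin γ ⟨hγ, hγ0⟩) hγ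
  obtain ⟨c₁, c, hc⟩ := hbasis _ hωα
  have hNαc : norm α = c * det α β := by
    rw [← det_omega_mul_self, hc]
    simp only [det, re_add, im_add, re_smul, im_smul, smul_eq_mul]; ring
  have hc0 : c ≠ 0 := by rintro rfl; rw [zero_mul] at hNαc; exact hNα.ne' hNαc
  refine ⟨α, hαI, c, hc0, ?_, fun γ hγ => ?_⟩
  · -- `4 N(α) N(β) = T² + (4k - 1) E²` with `T² ≤ N(α)² ≤ N(α) N(β)` and `N(α) = c E`
    have hT := abs_trace_mul_star_le hαI hβI hβ (fun γ hγ hγ0 => hβmin γ ⟨hγ, hγ0⟩)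
    have hαβ : norm α ≤ norm β := hαmin β ⟨hβI, by rintro rfl; simp [det] at hβ⟩
    have hT2 : trace (α * star β) ^ 2 ≤ norm α ^ 2 := sq_le_sq' (abs_le.mp hT).1 (abs_le.mp hT).2
    have h4 := four_mul_norm_mul_norm α β
    have hE : 0 < det α β ^ 2 := by positivity
    have : 3 * (c ^ 2 * det α β ^ 2) ≤ (4 * k - 1) * det α β ^ 2 := by
      rw [← mul_pow, ← hNαc]; nlinarith
    nlinarith
  · obtain ⟨X, Y, rfl⟩ := hbasis γ hγ
    refine ⟨(c * X : ℤ) + (Y : 𝒪) * ((ω : 𝒪) - c₁), ?_⟩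
    have : c • β = ω * α - c₁ • α := by rw [hc]; abel
    simp only [zsmul_eq_mul] at this ⊢
    push_cast
    linear_combination (Y : 𝒪) * this

theorem isPrincipalIdealRing_of_inert (hk : 0 < k)
    (hinert : ∀ p : ℕ, p.Prime → 3 * p ^ 2 ≤ 4 * k - 1 → ∀ r : ZMod p, r ^ 2 - r + k ≠ 0) :
    IsPrincipalIdealRing 𝒪 := by
  have := isDomain hk
  refine ⟨fun I => ?_⟩
  rcases eq_or_ne I ⊥ with rfl | hI
  · exact bot_isPrincipal
  obtain ⟨α, hαI, c, hc0, hcbound, hdvd⟩ := exists_forall_dvd_intCast_mul hk hI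
  refine Ideal.isPrincipal_of_isPrincipal_colon (Int.cast_ne_zero.mpr hc0) hdvd
    (Ideal.isPrincipal_of_natCast_mem (m := c.natAbs) (Int.natAbs_pos.mpr hc0) ?_ ?_)
  · rw [Submodule.mem_colon_singleton, smul_eq_mul, Ideal.mem_span_singleton_mul]
    obtain ⟨n, rfl | rfl⟩ := Int.eq_nat_or_neg c
    · exact ⟨α, hαI, by simp⟩
    · exact ⟨-α, I.neg_mem hαI, by simp⟩
  · intro p hp hpc
    have := Fact.mk hp
    refine isMaximal_span_natCast fun r hr =>
      hinert p hp ?_ r (by push_cast at hr; linear_combination hr)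
    have : (p : ℤ) ≤ |c| := by
      rw [Int.abs_eq_natAbs]; exact_mod_cast Nat.le_of_dvd (Int.natAbs_pos.mpr hc0) hpc
    nlinarith [sq_abs c, hp.pos]

theorem norm_omega_sub_star : norm (ω - star ω : 𝒪) = 4 * k - 1 := by
  simp [norm_def]; ring

theorem exists_pow_three_eq (hk : 2 ≤ k) [IsPrincipalIdealRing 𝒪] {α : 𝒪} {z : ℤ}
    (hα : IsRelPrime α (star α)) (hnorm : norm α = z ^ 3) : ∃ β : 𝒪, β ^ 3 = α := by
  have := isDomain (k := k) (by omega)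
  obtain ⟨β, u, hu⟩ := exists_associated_pow_of_mul_eq_pow' hα.isCoprime
    (c := algebraMap ℤ 𝒪 z) (by rw [← algebraMap_norm_eq_mul_star, hnorm, map_pow])
  rcases eq_one_or_eq_neg_one_of_isUnit hk u.isUnit with h | h
  · exact ⟨β, by rw [← hu, h, mul_one]⟩
  · exact ⟨-β, by rw [← hu, h]; ring⟩

theorem four_mul_im_pow_three (β : 𝒪) :
    4 * (β ^ 3).im = β.im * (3 * (2 * β.re + β.im) ^ 2 - (4 * k - 1) * β.im ^ 2) := by
  simp only [pow_succ, pow_zero, one_mul, re_mul, im_mul]; ring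

theorem four_mul_trace_pow_three (β : 𝒪) :
    4 * trace (β ^ 3) =
      (2 * β.re + β.im) * ((2 * β.re + β.im) ^ 2 - 3 * (4 * k - 1) * β.im ^ 2) := by
  simp only [trace_def, pow_succ, pow_zero, one_mul, re_mul, im_mul]; ring

end ImaginaryQuadratic

end QuadraticAlgebra

theorem odd_and_odd_of_mul_sq_add_sq {a x Y z : ℤ} (ha : a % 4 = 3) (hxY : IsCoprime x Y)
    (h : a * x ^ 2 + Y ^ 2 = 4 * z ^ 3) : Odd x ∧ Odd Y := by
  obtain ⟨m, rfl⟩ : ∃ m, a = 4 * m + 3 := ⟨a / 4, by omega⟩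
  rcases Int.even_or_odd' x with ⟨i, rfl | rfl⟩ <;> rcases Int.even_or_odd' Y with ⟨j, rfl | rfl⟩
  · exact absurd (hxY.isUnit_of_dvd' (dvd_mul_right 2 i) (dvd_mul_right 2 j)) (by decide)
  · have : (4 : ℤ) ∣ 1 := ⟨z ^ 3 - (4 * m + 3) * i ^ 2 - j ^ 2 - j, by linear_combination h⟩
    norm_num at this
  · have : (4 : ℤ) ∣ 3 := ⟨z ^ 3 - (4 * m + 3) * (i ^ 2 + i) - m - j ^ 2, by linear_combination h⟩
    norm_num at this
  · exact ⟨odd_two_mul_add_one i, odd_two_mul_add_one j⟩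

theorem isCoprime_of_mul_sq_add_sq {a x Y z : ℤ} (ha : Prime a) (ha2 : ¬ a ∣ 2)
    (hxY : IsCoprime x Y) (h : a * x ^ 2 + Y ^ 2 = 4 * z ^ 3) : IsCoprime Y a := by
  refine (ha.coprime_iff_not_dvd.mpr fun haY => ?_).symm
  have haz : a ∣ z := by
    have : a ∣ 2 ^ 2 * z ^ 3 := by
      rw [show (2 : ℤ) ^ 2 * z ^ 3 = a * x ^ 2 + Y ^ 2 by linear_combination -h]
      exact dvd_add (dvd_mul_right a _) (dvd_pow haY two_ne_zero)
    rcases ha.dvd_or_dvd this with h2 | hz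
    · exact absurd (ha.dvd_of_dvd_pow h2) ha2
    · exact ha.dvd_of_dvd_pow hz
  have hax : a ∣ x := by
    refine ha.dvd_of_dvd_pow (n := 2) ((mul_dvd_mul_iff_left ha.ne_zero).mp ?_)
    rw [show a * x ^ 2 = 4 * z * z ^ 2 - Y ^ 2 by linear_combination h]
    exact dvd_sub ((mul_dvd_mul haz haz).trans ⟨4 * z, by ring⟩)
      ((mul_dvd_mul haY haY).trans ⟨1, by ring⟩)
  exact ha.not_isUnit (hxY.isUnit_of_dvd' hax haY)

theorem isCoprime_of_dvd_four_mul {u v x Y : ℤ} (hu : Odd u) (hxY : IsCoprime x Y)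
    (hvx : v ∣ 4 * x) (huY : u ∣ 4 * Y) : IsCoprime u v := by
  refine isCoprime_of_prime_dvd (fun h => Int.not_odd_zero (h.1 ▸ hu)) fun p hp hpu hpv => ?_
  have hp4 : ¬ p ∣ 4 := fun h4 => by
    obtain ⟨m, rfl⟩ := hu
    have h2 : p ∣ 2 := hp.dvd_of_dvd_pow (n := 2) (by norm_num [h4])
    exact hp.not_isUnit (isUnit_of_dvd_one ((dvd_add_right (dvd_mul_of_dvd_left h2 m)).mp hpu))
  exact hp.not_isUnit (hxY.isUnit_of_dvd' ((hp.dvd_or_dvd (hpv.trans hvx)).resolve_left hp4)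
    ((hp.dvd_or_dvd (hpu.trans huY)).resolve_left hp4))

open QuadraticAlgebra in
theorem exists_pow_three_eq_mk {a k x Y z w : ℤ} (hak : a + 1 = 4 * k) (hk : 2 ≤ k)
    (ha : Prime a) [IsPrincipalIdealRing (QuadraticAlgebra ℤ (-k) 1)] (hxY : IsCoprime x Y)
    (h : a * x ^ 2 + Y ^ 2 = 4 * z ^ 3) (hw : Y - x = 2 * w) :
    ∃ β : QuadraticAlgebra ℤ (-k) 1, β ^ 3 = ⟨w, x⟩ ∧ norm β = z := by
  let α : QuadraticAlgebra ℤ (-k) 1 := ⟨w, x⟩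
  have hnorm : norm α = z ^ 3 := by
    have : 4 * norm α = 4 * z ^ 3 := by
      rw [four_mul_norm]
      linear_combination h - (2 * w + x + Y) * hw - x ^ 2 * hak
    linarith
  have ha2 : ¬ a ∣ 2 := fun h2 => by have := Int.le_of_dvd two_pos h2; omega
  have hcop : IsRelPrime α (star α) := by
    refine isRelPrime_star ?_
    rw [norm_omega_sub_star, trace_def, show 2 * α.re + 1 * α.im = Y by dsimp [α]; linarith,
      show 4 * k - 1 = a by omega]
    exact hxY.symm.mul_right (isCoprime_of_mul_sq_add_sq ha ha2 hxY h)
  obtain ⟨β, hβ⟩ := exists_pow_three_eq hk hcop hnorm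
  exact ⟨β, hβ, (Odd.pow_inj (n := 3) ⟨1, rfl⟩).mp (by rw [← map_pow, hβ, hnorm])⟩

open QuadraticAlgebra in
theorem exists_odd_parametrization {a k x Y z : ℤ} (hak : a + 1 = 4 * k) (hk : 2 ≤ k)
    (ha : Prime a) [IsPrincipalIdealRing (QuadraticAlgebra ℤ (-k) 1)] (hxY : IsCoprime x Y)
    (h : a * x ^ 2 + Y ^ 2 = 4 * z ^ 3) :
    ∃ u v : ℤ, Odd u ∧ Odd v ∧ IsCoprime u v ∧ 4 * x = v * (3 * u ^ 2 - a * v ^ 2) ∧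
      4 * Y = u * (u ^ 2 - 3 * a * v ^ 2) ∧ 4 * z = u ^ 2 + a * v ^ 2 := by
  obtain ⟨hx, hY⟩ := odd_and_odd_of_mul_sq_add_sq (by omega) hxY h
  obtain ⟨w, hw⟩ := (hY.sub_odd hx).two_dvd
  obtain ⟨β, hβ, hz⟩ := exists_pow_three_eq_mk hak hk ha hxY h hw
  have ha' : a = 4 * k - 1 := by omega
  set u := 2 * β.re + β.im
  set v := β.im
  have hx4 : 4 * x = v * (3 * u ^ 2 - a * v ^ 2) := by
    rw [ha', ← four_mul_im_pow_three, hβ]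
  have hY4 : 4 * Y = u * (u ^ 2 - 3 * a * v ^ 2) := by
    rw [ha', ← four_mul_trace_pow_three, hβ, trace_def]
    linear_combination 4 * hw
  have hz4 : 4 * z = u ^ 2 + a * v ^ 2 := by
    rw [ha', ← hz, four_mul_norm]
  have hv : Odd v := by
    rcases Int.even_or_odd v with ⟨t, ht⟩ | hv
    · refine absurd hx (Int.not_odd_iff_even.mpr ⟨t * (3 * (β.re + t) ^ 2 - a * t ^ 2), ?_⟩)
      have hu : u = 2 * (β.re + t) := by rw [show u = 2 * β.re + v from rfl, ht]; ring
      rw [hu, ht] at hx4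
      linarith
    · exact hv
  have hu : Odd u := (even_two_mul _).add_odd hv
  exact ⟨u, v, hu, hv, isCoprime_of_dvd_four_mul hu hxY ⟨_, hx4⟩ ⟨_, hY4⟩, hx4, hY4, hz4⟩

theorem factorization_ax2_y2n_4z3_general
    (a : ℤ) (ha : a ∈ ({7, 11, 19, 43, 67, 163} : Set ℤ))
    (n : ℕ)
    (x y z : ℤ) (hgcd : Int.gcd x y = 1)
    (heq : a * x ^ 2 + y ^ (2 * n) = 4 * z ^ 3) :
    ∃ u v : ℤ, Odd u ∧ Odd v ∧ Int.gcd u v = 1 ∧ u * v ≠ 0 ∧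
      4 * x = v * (3 * u ^ 2 - a * v ^ 2) ∧
      4 * y ^ n = u * (u ^ 2 - 3 * a * v ^ 2) ∧
      4 * z = u ^ 2 + a * v ^ 2 := by
  obtain ⟨hak, hk, hprime, hinert⟩ : a + 1 = 4 * ((a + 1) / 4) ∧ 2 ≤ (a + 1) / 4 ∧ Prime a ∧
      ∀ p : ℕ, p.Prime → 3 * p ^ 2 ≤ a →
        ∀ r : ZMod p, r ^ 2 - r + (((a + 1) / 4 : ℤ) : ZMod p) ≠ 0 := by
    simp only [Set.mem_insert_iff, Set.mem_singleton_iff] at ha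
    rcases ha with rfl | rfl | rfl | rfl | rfl | rfl <;>
      refine ⟨by norm_num, by norm_num, by norm_num, fun p hp hle => ?_⟩ <;>
      have : p ≤ 7 := by nlinarith
    all_goals have := hp.two_le; interval_cases p <;> revert hp hle <;> decide
  have := QuadraticAlgebra.isPrincipalIdealRing_of_inert (by omega) fun p hp hle =>
    hinert p hp (by omega)
  obtain ⟨u, v, hu, hv, huv, hx, hy, hz⟩ := exists_odd_parametrization hak hk hprime
    ((Int.isCoprime_iff_gcd_eq_one.mpr hgcd).pow_right) (by rw [← pow_mul, mul_comm n 2]; exact heq)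
  exact ⟨u, v, hu, hv, Int.isCoprime_iff_gcd_eq_one.mp huv,
    mul_ne_zero (fun h => Int.not_odd_zero (h ▸ hu)) (fun h => Int.not_odd_zero (h ▸ hv)),
    hx, hy, hz⟩

theorem factorization_ax2_y2n_4z3
    (a : ℤ) (ha : a ∈ ({7, 11, 19, 43, 67, 163} : Set ℤ))
    (n : ℕ) (hn : 0 < n)
    (x y z : ℤ) (hgcd : Int.gcd x y = 1)
    (heq : a * x ^ 2 + y ^ (2 * n) = 4 * z ^ 3) :
    ∃ u v : ℤ, Odd u ∧ Odd v ∧ Int.gcd u v = 1 ∧ u * v ≠ 0 ∧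
      4 * x = v * (3 * u ^ 2 - a * v ^ 2) ∧
      4 * y ^ n = u * (u ^ 2 - 3 * a * v ^ 2) ∧
      4 * z = u ^ 2 + a * v ^ 2 :=
  factorization_ax2_y2n_4z3_general a ha n x y z hgcd heq
end

section
/- There are no integers x, y, z with gcd(x,y) = 1 satisfying 7x^2 + y^6 = 4z^3. -/
/-!
Modulo 7 a sixth power is 0 or 1 and four times a cube is 0, 3 or 4, so a solution has
`7 ∣ y` and `7 ∣ z`. Then `7 x² = 4 z³ - y⁶` is divisible by `7³`, forcing `7 ∣ x` and
contradicting `gcd(x, y) = 1`.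
-/

theorem ZMod.eq_zero_of_pow_six_eq_four_mul_pow_three :
    ∀ a b : ZMod 7, a ^ 6 = 4 * b ^ 3 → a = 0 ∧ b = 0 := by
  decide

theorem Int.seven_dvd_of_seven_mul_sq_add_pow_six_eq {x y z : ℤ}
    (h : 7 * x ^ 2 + y ^ 6 = 4 * z ^ 3) : 7 ∣ y ∧ 7 ∣ z := by
  have hmod : (y : ZMod 7) ^ 6 = 4 * (z : ZMod 7) ^ 3 := by
    have := congrArg (fun n : ℤ => (n : ZMod 7)) h
    push_cast at this
    rw [show (7 : ZMod 7) = 0 from rfl] at this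
    linear_combination this
  obtain ⟨hy, hz⟩ := ZMod.eq_zero_of_pow_six_eq_four_mul_pow_three _ _ hmod
  exact ⟨(ZMod.intCast_zmod_eq_zero_iff_dvd y 7).mp hy,
    (ZMod.intCast_zmod_eq_zero_iff_dvd z 7).mp hz⟩

theorem Int.dvd_of_mul_sq_add_pow_six_eq {p x y z : ℤ} (hp : p ≠ 0)
    (h : p * x ^ 2 + y ^ 6 = 4 * z ^ 3) (hy : p ∣ y) (hz : p ∣ z) : p ∣ x := by
  obtain ⟨a, rfl⟩ := hy
  obtain ⟨b, rfl⟩ := hz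
  have hx : p * x ^ 2 = p * (p ^ 2 * (4 * b ^ 3 - p ^ 3 * a ^ 6)) := by
    linear_combination h
  rw [← Int.pow_dvd_pow_iff two_ne_zero]
  exact ⟨_, mul_left_cancel₀ hp hx⟩

theorem no_primitive_solutions_7x2_y6_4z3 :
    ¬ ∃ x y z : ℤ, Int.gcd x y = 1 ∧ 7 * x ^ 2 + y ^ 6 = 4 * z ^ 3 := by
  rintro ⟨x, y, z, hgcd, h⟩
  obtain ⟨hy, hz⟩ := Int.seven_dvd_of_seven_mul_sq_add_pow_six_eq h
  have hx : 7 ∣ x := Int.dvd_of_mul_sq_add_pow_six_eq (by norm_num) h hy hz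
  have : (7 : ℤ) ∣ 1 := by simpa [hgcd] using Int.dvd_coe_gcd hx hy
  omega
end

section
/- Let f₁(X) = 3(21X^2 − 14X − 3)(2499X^4 + 1764X^3 + 378X^2 + 84X − 5), f₂(X) = −f₁(X), f₃(X) = 3(21X^2 − 14X − 3)(−245X^4 − 588X^3 + 378X^2 − 252X + 51), and f₄(X) = −f₃(X). Then for each i ∈ {1,2,3,4} there are no X, Y in the field Q₂ of 2-adic numbers satisfying Y^2 = fᵢ(X). -/
/-!
Write `f` as an integral polynomial of degree `6`. A point with `X ∈ ℤ₂` makes `f(X)` a square in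
`ℤ₂`; a point with `X ∉ ℤ₂` has `X⁻¹ = 2s` with `s ∈ ℤ₂` and makes `X⁻⁶ f(X) = f̃(2s)` a square,
where `f̃` is the reversed polynomial. So it suffices that two integral polynomials take no square
values on `ℤ₂`. For that we cover `ℤ₂` by residue classes `c + 2ᵏℤ₂`: on each class either the
values of the polynomial are nonsquares already modulo `8`, or they are all divisible by `4 = 2²`
and we may divide by it, or the class is split in two. For the four sextics this search stops at
depth `11`, and at depth `2` for their reversals.
-/

open PadicInt

def hornerEval {R : Type*} [CommRing R] : List ℤ → R → R
  | [], _ => 0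
  | a :: p, x => a + x * hornerEval p x

def addCoeffs : List ℤ → List ℤ → List ℤ
  | [], q => q
  | p, [] => p
  | a :: p, b :: q => (a + b) :: addCoeffs p q

def substAffine (c b : ℤ) : List ℤ → List ℤ
  | [] => []
  | a :: p =>
    let r := substAffine c b p
    addCoeffs (a :: r.map (b * ·)) (r.map (c * ·))

section HornerEval

variable {R S : Type*} [CommRing R] [CommRing S]

@[simp] lemma hornerEval_nil (x : R) : hornerEval [] x = 0 := rfl

@[simp] lemma hornerEval_cons (a : ℤ) (p : List ℤ) (x : R) :
    hornerEval (a :: p) x = a + x * hornerEval p x := rfl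

lemma map_hornerEval (φ : R →+* S) (p : List ℤ) (x : R) :
    φ (hornerEval p x) = hornerEval p (φ x) := by
  induction p with
  | nil => simp
  | cons a p ih => simp [ih]

lemma hornerEval_addCoeffs (p q : List ℤ) (x : R) :
    hornerEval (addCoeffs p q) x = hornerEval p x + hornerEval q x := by
  induction p, q using addCoeffs.induct with
  | case1 q => simp [addCoeffs]
  | case2 p hp => cases p <;> simp_all [addCoeffs]
  | case3 a p b q ih =>
    simp only [addCoeffs, hornerEval_cons, Int.cast_add, ih]
    ring

lemma hornerEval_map_mul (k : ℤ) (p : List ℤ) (x : R) :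
    hornerEval (p.map (k * ·)) x = k * hornerEval p x := by
  induction p with
  | nil => simp
  | cons a p ih =>
    simp only [List.map_cons, hornerEval_cons, Int.cast_mul, ih]
    ring

lemma hornerEval_map_ediv {k : ℤ} {p : List ℤ} (hp : ∀ a ∈ p, k ∣ a) (x : R) :
    hornerEval p x = k * hornerEval (p.map (· / k)) x := by
  rw [← hornerEval_map_mul, List.map_map]
  congr 1
  exact ((List.map_congr_left fun a ha => Int.mul_ediv_cancel' (hp a ha)).trans p.map_id).symm

lemma hornerEval_substAffine (c b : ℤ) (p : List ℤ) (x : R) :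
    hornerEval (substAffine c b p) x = hornerEval p (c + b * x) := by
  induction p with
  | nil => simp [substAffine]
  | cons a p ih =>
    simp only [substAffine, hornerEval_addCoeffs, hornerEval_cons, hornerEval_map_mul, ih]
    ring

lemma hornerEval_append (p q : List ℤ) (x : R) :
    hornerEval (p ++ q) x = hornerEval p x + x ^ p.length * hornerEval q x := by
  induction p with
  | nil => simp
  | cons a p ih =>
    simp only [List.cons_append, hornerEval_cons, ih, List.length_cons]
    ring

lemma pow_length_mul_hornerEval_reverse {K : Type*} [Field K] (p : List ℤ) (x : K) :
    x ^ p.length * hornerEval p.reverse x⁻¹ = x * hornerEval p x := by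
  induction p with
  | nil => simp
  | cons a p ih =>
    rcases eq_or_ne x 0 with rfl | hx
    · simp
    · simp only [List.reverse_cons, hornerEval_append, List.length_reverse, List.length_cons,
        hornerEval_cons, hornerEval_nil, inv_pow]
      rw [← ih]
      field_simp
      ring

lemma hornerEval_eq_sq_mul_reverse {K : Type*} [Field K] {p : List ℤ} {d : ℕ}
    (hp : p.length = 2 * d + 1) {x : K} (hx : x ≠ 0) :
    hornerEval p x = (x ^ d) ^ 2 * hornerEval p.reverse x⁻¹ := by
  have h := pow_length_mul_hornerEval_reverse p x
  rw [hp] at h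
  apply mul_left_cancel₀ hx
  rw [← h]
  ring

end HornerEval

lemma IsSquare.of_sq_mul {R : Type*} [CommRing R] [IsDomain R] {π w : R} (hπ : Prime π)
    (h : IsSquare (π ^ 2 * w)) : IsSquare w := by
  obtain ⟨y, hy⟩ := h
  obtain ⟨z, rfl⟩ : π ∣ y := hπ.dvd_of_dvd_pow (n := 2) ⟨π * w, by rw [pow_two, ← hy]; ring⟩
  refine ⟨z, mul_left_cancel₀ (pow_ne_zero 2 hπ.ne_zero) ?_⟩
  rw [hy]
  ring

namespace PadicInt

variable {p : ℕ} [Fact p.Prime]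

lemma isSquare_coe_iff (z : ℤ_[p]) : IsSquare (z : ℚ_[p]) ↔ IsSquare z := by
  refine ⟨fun ⟨Y, hY⟩ => ?_, fun h => h.map (Coe.ringHom (p := p))⟩
  have hY1 : ‖Y‖ ≤ 1 := by
    have : ‖Y‖ * ‖Y‖ ≤ 1 := by rw [← norm_mul, ← hY]; exact z.2
    nlinarith [norm_nonneg Y]
  exact ⟨⟨Y, hY1⟩, Subtype.ext hY⟩

lemma coe_hornerEval (P : List ℤ) (x : ℤ_[p]) :
    ((hornerEval P x : ℤ_[p]) : ℚ_[p]) = hornerEval P (x : ℚ_[p]) :=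
  map_hornerEval (Coe.ringHom (p := p)) P x

lemma exists_inv_eq_mul {X : ℚ_[p]} (hX : 1 < ‖X‖) : ∃ s : ℤ_[p], X⁻¹ = p * s := by
  have hX' : ‖X⁻¹‖ < 1 := by rw [norm_inv]; exact inv_lt_one_of_one_lt₀ hX
  obtain ⟨s, hs⟩ := (norm_lt_one_iff_dvd ⟨X⁻¹, hX'.le⟩).1 hX'
  exact ⟨s, congrArg Subtype.val hs⟩

lemma eq_two_mul_or_eq_one_add_two_mul (t : ℤ_[2]) :
    (∃ s, t = 2 * s) ∨ ∃ s, t = 1 + 2 * s := by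
  obtain ⟨n, hn, ht⟩ := exists_mem_range t
  rw [maximalIdeal_eq_span_p, Ideal.mem_span_singleton] at ht
  obtain ⟨s, hs⟩ := ht
  interval_cases n
  · exact .inl ⟨s, by simpa using hs⟩
  · exact .inr ⟨s, by push_cast at hs; linear_combination hs⟩

end PadicInt

def checkNoSquares : ℕ → List ℤ → Bool
  | 0, _ => false
  | n + 1, p =>
    decide (∀ x y : ZMod 8, y ^ 2 ≠ hornerEval p x) ||
    (p.all (· % 4 == 0) && checkNoSquares n (p.map (· / 4))) ||
    (checkNoSquares n (substAffine 0 2 p) && checkNoSquares n (substAffine 1 2 p))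

theorem not_isSquare_hornerEval_of_checkNoSquares {n : ℕ} {p : List ℤ}
    (h : checkNoSquares n p = true) (t : ℤ_[2]) : ¬ IsSquare (hornerEval p t) := by
  induction n generalizing p t with
  | zero => simp [checkNoSquares] at h
  | succ n ih =>
    simp only [checkNoSquares, Bool.or_eq_true, Bool.and_eq_true, decide_eq_true_eq,
      List.all_eq_true, beq_iff_eq] at h
    rcases h with (hmod8 | ⟨hdvd, hquot⟩) | ⟨heven, hodd⟩
    · intro hsq
      obtain ⟨y, hy⟩ := hsq.map (toZModPow 3)
      rw [map_hornerEval] at hy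
      exact hmod8 _ y (by rw [hy, sq])
    · rw [hornerEval_map_ediv (k := 2 ^ 2) fun a ha => Int.dvd_of_emod_eq_zero (hdvd a ha)]
      push_cast
      exact fun hsq => ih hquot t (hsq.of_sq_mul prime_p)
    · rcases t.eq_two_mul_or_eq_one_add_two_mul with ⟨s, rfl⟩ | ⟨s, rfl⟩
      · simpa [hornerEval_substAffine] using ih heven s
      · simpa [hornerEval_substAffine] using ih hodd s

theorem not_exists_sq_eq_of_checkNoSquares {f : ℚ_[2] → ℚ_[2]} (P : List ℤ) {d n m : ℕ}
    (hf : ∀ X, f X = hornerEval P X) (hP : P.length = 2 * d + 1)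
    (hint : checkNoSquares n P = true)
    (hinf : checkNoSquares m (substAffine 0 2 P.reverse) = true) :
    ¬ ∃ X Y : ℚ_[2], Y ^ 2 = f X := by
  rintro ⟨X, Y, h⟩
  rw [hf] at h
  by_cases hX : ‖X‖ ≤ 1
  · obtain ⟨x, rfl⟩ : ∃ x : ℤ_[2], (x : ℚ_[2]) = X := ⟨⟨X, hX⟩, rfl⟩
    refine not_isSquare_hornerEval_of_checkNoSquares hint x ((isSquare_coe_iff _).1 ⟨Y, ?_⟩)
    rw [coe_hornerEval, ← sq]
    exact h.symm
  · obtain ⟨s, hs⟩ := exists_inv_eq_mul (not_le.1 hX)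
    have hX0 : X ≠ 0 := by rintro rfl; simp at hX
    refine not_isSquare_hornerEval_of_checkNoSquares hinf s
      ((isSquare_coe_iff _).1 ⟨Y / X ^ d, ?_⟩)
    rw [coe_hornerEval, hornerEval_substAffine]
    push_cast at hs ⊢
    rw [zero_add, ← hs, div_mul_div_comm, ← sq, h, hornerEval_eq_sq_mul_reverse hP hX0, ← sq,
      mul_div_cancel_left₀ _ (pow_ne_zero _ (pow_ne_zero _ hX0))]

theorem no_2adic_points_genus2_curves :
    (¬ ∃ X Y : ℚ_[2], Y ^ 2 = 3 * (21 * X ^ 2 - 14 * X - 3)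
        * (2499 * X ^ 4 + 1764 * X ^ 3 + 378 * X ^ 2 + 84 * X - 5)) ∧
    (¬ ∃ X Y : ℚ_[2], Y ^ 2 = -(3 * (21 * X ^ 2 - 14 * X - 3)
        * (2499 * X ^ 4 + 1764 * X ^ 3 + 378 * X ^ 2 + 84 * X - 5))) ∧
    (¬ ∃ X Y : ℚ_[2], Y ^ 2 = 3 * (21 * X ^ 2 - 14 * X - 3)
        * (-245 * X ^ 4 - 588 * X ^ 3 + 378 * X ^ 2 - 252 * X + 51)) ∧
    (¬ ∃ X Y : ℚ_[2], Y ^ 2 = -(3 * (21 * X ^ 2 - 14 * X - 3)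
        * (-245 * X ^ 4 - 588 * X ^ 3 + 378 * X ^ 2 - 252 * X + 51))) := by
  refine ⟨not_exists_sq_eq_of_checkNoSquares [45, -546, -7245, -26460, -72765, 6174, 157437]
      (d := 3) (n := 11) (m := 2) ?_ rfl (by decide) (by decide),
    not_exists_sq_eq_of_checkNoSquares [-45, 546, 7245, 26460, 72765, -6174, -157437]
      (d := 3) (n := 11) (m := 2) ?_ rfl (by decide) (by decide),
    not_exists_sq_eq_of_checkNoSquares [-459, 126, 10395, -26460, 50715, -26754, -15435]
      (d := 3) (n := 11) (m := 2) ?_ rfl (by decide) (by decide),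
    not_exists_sq_eq_of_checkNoSquares [459, -126, -10395, 26460, -50715, 26754, 15435]
      (d := 3) (n := 11) (m := 2) ?_ rfl (by decide) (by decide)⟩
  all_goals
    intro X
    simp only [hornerEval_cons, hornerEval_nil]
    push_cast
    ring
end

section
/- Let p be an odd prime and suppose x, y, z are integers with gcd(x,y) = 1 satisfying 7x^2 + y^{2p} = 4z^3. Then there exist odd integers α, β, v that are pairwise coprime such that either (i) α^{2p} − 4β^p = 21v^2 and y = α·β, or (ii) 3^{2p−3}·α^{2p} − 4β^p = 7v^2 and y = 3·α·β. -/
/-!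
Put `Y = y ^ p`, so that `Y ^ 2 + 7 x ^ 2 = 4 z ^ 3` with `x`, `Y` coprime. Parity forces `x` and
`Y` to be odd, and `7 ∤ Y`. The ring `ℤ[(1 + √-7) / 2]` is norm-Euclidean; in it
`δ = (Y + x √-7) / 2` has norm `z ^ 3` and is coprime to its conjugate, so `δ` is a cube
(the only units are `±1`). Writing the cube root as `(a + b √-7) / 2` gives
`4 Y = a (a ^ 2 - 21 b ^ 2)` with `a`, `b` odd and coprime.

If `3 ∤ a`, then `y ^ p = a m` with `4 m = a ^ 2 - 21 b ^ 2`, the factors are coprime, hence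
`a = α ^ p`, `m = β ^ p`, and `4 m = a ^ 2 - 21 b ^ 2` is case (i) with `v = b`. If `a = 3 a₀`,
then `y = 3 y₀` and `3 ^ (p - 2) y₀ ^ p = a₀ m` with `4 m = 3 a₀ ^ 2 - 7 b ^ 2` prime to `3`, so
`a₀ = 3 ^ (p - 2) α ^ p`, `m = β ^ p`, and this is case (ii).
-/

/-- `ℤ[ω]` with `ω = (1 + √-7) / 2`, the root of `ω ^ 2 = ω - 2`. -/
abbrev KleinInt : Type := QuadraticAlgebra ℤ (-2) 1

namespace KleinInt

theorem four_mul_norm (z : KleinInt) : 4 * z.norm = (2 * z.re + z.im) ^ 2 + 7 * z.im ^ 2 := by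
  rw [QuadraticAlgebra.norm_def]; ring

theorem norm_nonneg (z : KleinInt) : 0 ≤ z.norm := by
  nlinarith [four_mul_norm z, sq_nonneg (2 * z.re + z.im), sq_nonneg z.im]

theorem norm_eq_zero_iff {z : KleinInt} : z.norm = 0 ↔ z = 0 := by
  refine ⟨fun h => ?_, fun h => by simp [h]⟩
  have hb : z.im = 0 := by
    nlinarith [four_mul_norm z, sq_nonneg (2 * z.re + z.im), sq_nonneg z.im]
  have ha : z.re = 0 := by nlinarith [four_mul_norm z, sq_nonneg (2 * z.re + z.im)]
  ext <;> assumption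

theorem norm_pos {z : KleinInt} (hz : z ≠ 0) : 0 < z.norm :=
  (norm_nonneg z).lt_of_ne' (mt norm_eq_zero_iff.mp hz)

instance : IsDomain KleinInt :=
  have : NoZeroDivisors KleinInt := ⟨fun {z w} h => by
    simpa [← norm_eq_zero_iff] using congrArg QuadraticAlgebra.norm h⟩
  NoZeroDivisors.to_isDomain _

theorem mul_star_eq_norm (z : KleinInt) : z * star z = z.norm := by
  rw [← QuadraticAlgebra.algebraMap_norm_eq_mul_star]; rfl

theorem sq_add_mul_add_two_mul_sq_lt_one {u v : ℚ} (hv : |v| ≤ 1 / 2)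
    (huv : |u + v / 2| ≤ 1 / 2) : u ^ 2 + u * v + 2 * v ^ 2 < 1 := by
  have h1 : (u + v / 2) ^ 2 ≤ (1 / 2) ^ 2 := sq_le_sq' (abs_le.mp huv).1 (abs_le.mp huv).2
  have h2 : v ^ 2 ≤ (1 / 2) ^ 2 := sq_le_sq' (abs_le.mp hv).1 (abs_le.mp hv).2
  nlinarith

/-- Rounds `z * star w / norm w` so that the error `u + v ω` has `|v| ≤ 1/2` and
`|u + v/2| ≤ 1/2`; its norm `(u + v/2) ^ 2 + 7 v ^ 2 / 4` is then below `1`. -/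
noncomputable def div (z w : KleinInt) : KleinInt :=
  let c : ℚ := (z * star w).re / w.norm
  let d : ℚ := (z * star w).im / w.norm
  ⟨round (c + (d - round d) / 2), round d⟩

theorem div_zero (z : KleinInt) : div z 0 = 0 := by
  ext <;> simp [div]

theorem norm_sub_div_mul_lt (z : KleinInt) {w : KleinInt} (hw : w ≠ 0) :
    (z - div z w * w).norm < w.norm := by
  have hn : (0 : ℚ) < w.norm := by exact_mod_cast norm_pos hw
  set q := div z w
  set c := (z * star w).re
  set d := (z * star w).im
  set u : ℚ := c / w.norm - q.re
  set v : ℚ := d / w.norm - q.im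
  have hv : |v| ≤ 1 / 2 := abs_sub_round _
  have huv : |u + v / 2| ≤ 1 / 2 := by
    have hqre : q.re = round ((c / w.norm : ℚ) + v / 2) := rfl
    rw [show u + v / 2 = (c / w.norm : ℚ) + v / 2 - q.re by ring, hqre]
    exact abs_sub_round _
  have hmul : (z - q * w).norm * w.norm = (z * star w - q * (w.norm : KleinInt)).norm := by
    calc (z - q * w).norm * w.norm = ((z - q * w) * star w).norm := by
          rw [map_mul, QuadraticAlgebra.norm_star]
      _ = (z * star w - q * (w * star w)).norm := by ring_nf
      _ = _ := by rw [mul_star_eq_norm]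
  have hc : (c : ℚ) = w.norm * (u + q.re) := by simp only [u]; field_simp; ring
  have hd : (d : ℚ) = w.norm * (v + q.im) := by simp only [v]; field_simp; ring
  have key : ((z - q * w).norm : ℚ) * w.norm =
      (w.norm : ℚ) ^ 2 * (u ^ 2 + u * v + 2 * v ^ 2) := by
    have hcoord : z * star w - q * (w.norm : KleinInt) =
        ⟨c - q.re * w.norm, d - q.im * w.norm⟩ := by
      ext <;> simp [c, d]
    rw [← Int.cast_mul, hmul, hcoord, QuadraticAlgebra.norm_def]
    push_cast
    rw [hc, hd]
    ring
  have hlt := sq_add_mul_add_two_mul_sq_lt_one hv huv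
  have : ((z - q * w).norm : ℚ) * w.norm < w.norm * w.norm := by
    rw [key]; nlinarith [mul_lt_mul_of_pos_left hlt (pow_pos hn 2)]
  exact_mod_cast lt_of_mul_lt_mul_right this hn.le

noncomputable instance : EuclideanDomain KleinInt where
  quotient := div
  quotient_zero := div_zero
  remainder z w := z - div z w * w
  quotient_mul_add_remainder_eq z w := by ring
  r := InvImage (· < ·) fun z => z.norm.toNat
  r_wellFounded := (measure fun z : KleinInt => z.norm.toNat).wf
  remainder_lt z w hw := (Int.toNat_lt_toNat (norm_pos hw)).mpr (norm_sub_div_mul_lt z hw)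
  mul_left_not_lt z w hw := by
    simp only [InvImage, map_mul, not_lt]
    have : z.norm * 1 ≤ z.norm * w.norm :=
      mul_le_mul_of_nonneg_left (norm_pos hw) (norm_nonneg z)
    omega

theorem isUnit_iff {u : KleinInt} : IsUnit u ↔ u = 1 ∨ u = -1 := by
  refine ⟨fun hu => ?_, by rintro (rfl | rfl) <;> simp⟩
  have h1 : u.norm = 1 :=
    Int.eq_one_of_dvd_one (norm_nonneg u) (isUnit_iff_dvd_one.mp (hu.map QuadraticAlgebra.norm))
  have h4 := four_mul_norm u
  have hb : u.im = 0 := by nlinarith [sq_nonneg (2 * u.re + u.im), sq_nonneg u.im]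
  have ha : u.re ^ 2 = 1 := by rw [hb] at h4; linarith
  rcases sq_eq_one_iff.mp ha with ha | ha
  · exact Or.inl (QuadraticAlgebra.ext ha hb)
  · exact Or.inr (QuadraticAlgebra.ext ha hb)

theorem eq_pow_of_mul_eq_pow_odd_left {z w c : KleinInt} (hzw : IsCoprime z w) {k : ℕ}
    (hk : Odd k) (h : z * w = c ^ k) : ∃ d, z = d ^ k := by
  obtain ⟨d, u, hu⟩ := exists_associated_pow_of_mul_eq_pow' hzw h
  rcases isUnit_iff.mp u.isUnit with hu1 | hu1
  · exact ⟨d, by rw [← hu, hu1, mul_one]⟩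
  · exact ⟨-d, by rw [← hu, hu1, hk.neg_pow, mul_neg_one]⟩

/-- `√-7 = 2ω - 1`. -/
def sqrtNegSeven : KleinInt := ⟨-1, 2⟩

theorem isCoprime_star {z : KleinInt} (h : IsCoprime (2 * z.re + z.im) (7 * z.im)) :
    IsCoprime z (star z) := by
  have htrace : ((2 * z.re + z.im : ℤ) : KleinInt) = z + star z := by
    ext <;> simp [QuadraticAlgebra.re_ofNat, QuadraticAlgebra.im_ofNat]
    ring
  have hdiff : ((7 * z.im : ℤ) : KleinInt) = sqrtNegSeven * (star z - z) := by
    ext <;> simp [sqrtNegSeven, QuadraticAlgebra.re_ofNat, QuadraticAlgebra.im_ofNat] <;> ring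
  obtain ⟨u, v, huv⟩ := h.map (Int.castRingHom KleinInt)
  simp only [eq_intCast, htrace, hdiff] at huv
  exact ⟨u - v * sqrtNegSeven, u + v * sqrtNegSeven, by linear_combination huv⟩

/-- With `2δ = Y + x √-7 = (2π) ^ 3` and `2π = a + b √-7`, comparing coordinates gives both
identities. -/
theorem exists_of_sq_add_seven_mul_sq_eq_four_mul_cube {x Y z : ℤ} (hx : Odd x) (hY : Odd Y)
    (hcop : IsCoprime Y (7 * x)) (h : Y ^ 2 + 7 * x ^ 2 = 4 * z ^ 3) :
    ∃ a b : ℤ, Odd a ∧ Odd b ∧ 4 * Y = a * (a ^ 2 - 21 * b ^ 2) ∧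
      4 * x = b * (3 * a ^ 2 - 7 * b ^ 2) := by
  obtain ⟨s, hs⟩ := hY.sub_odd hx
  set δ : KleinInt := ⟨s, x⟩
  have hδ : IsCoprime δ (star δ) := isCoprime_star (by convert hcop using 1; simp [δ]; omega)
  have hnorm : δ * star δ = (z : KleinInt) ^ 3 := by
    have h4 : 4 * δ.norm = 4 * z ^ 3 := by
      rw [four_mul_norm]
      linear_combination h - (Y + x + 2 * s) * hs
    rw [mul_star_eq_norm, show δ.norm = z ^ 3 by omega, Int.cast_pow]
  obtain ⟨π, hπ⟩ := eq_pow_of_mul_eq_pow_odd_left hδ (by decide) hnorm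
  have hre := congrArg QuadraticAlgebra.re hπ
  have him := congrArg QuadraticAlgebra.im hπ
  simp only [pow_succ, pow_zero, one_mul, QuadraticAlgebra.re_mul, QuadraticAlgebra.im_mul,
    δ] at hre him
  have hb : Odd π.im := by
    have hx' : x = π.im * (3 * π.re ^ 2 + 3 * π.re * π.im - π.im ^ 2) := by
      linear_combination him
    exact (Int.odd_mul.mp (hx' ▸ hx)).1
  refine ⟨2 * π.re + π.im, π.im, (even_two_mul π.re).add_odd hb, hb, ?_, ?_⟩
  · linear_combination 4 * hs + 8 * hre + 4 * him
  · linear_combination 4 * him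

end KleinInt

theorem Int.prime_seven : Prime (7 : ℤ) := Int.prime_iff_natAbs_prime.mpr (by norm_num)

theorem Int.isCoprime_four_right {a : ℤ} (ha : Odd a) : IsCoprime a 4 := by
  simpa using (Int.isCoprime_two_right.mpr ha).pow_right (n := 2)

theorem odd_and_odd_of_even_sq_add_seven_mul_sq {x Y : ℤ} (hcop : IsCoprime x Y)
    (h : Even (Y ^ 2 + 7 * x ^ 2)) : Odd x ∧ Odd Y := by
  have hxY : Even Y ↔ Even x := by
    simpa [Int.even_add, parity_simps, show ¬ Even (7 : ℤ) by decide] using h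
  have hx : Odd x := by
    refine Int.not_even_iff_odd.mp fun hx => ?_
    have h2 := hcop.isUnit_of_dvd' (even_iff_two_dvd.mp hx) (even_iff_two_dvd.mp (hxY.mpr hx))
    exact absurd (Int.isUnit_iff.mp h2) (by decide)
  exact ⟨hx, Int.not_even_iff_odd.mp fun hY => Int.not_even_iff_odd.mpr hx (hxY.mp hY)⟩

theorem not_seven_dvd_of_sq_add_seven_mul_sq_eq {x Y z : ℤ} (hcop : IsCoprime x Y)
    (h : Y ^ 2 + 7 * x ^ 2 = 4 * z ^ 3) : ¬ 7 ∣ Y := by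
  rintro ⟨k, rfl⟩
  have h4z : 7 ∣ 4 * z ^ 3 := ⟨7 * k ^ 2 + x ^ 2, by linear_combination -h⟩
  obtain ⟨m, rfl⟩ :=
    Int.prime_seven.dvd_of_dvd_pow ((Int.prime_seven.dvd_mul.mp h4z).resolve_left (by decide))
  have hx : 7 ∣ x := Int.prime_seven.dvd_of_dvd_pow (n := 2) ⟨28 * m ^ 3 - k ^ 2, by linarith⟩
  exact absurd (Int.isUnit_iff.mp (hcop.isUnit_of_dvd' hx (dvd_mul_right 7 k))) (by decide)

theorem exists_odd_coprime_of_sq_add_seven_mul_sq_eq_four_mul_cube {x Y z : ℤ}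
    (hcop : IsCoprime x Y) (h : Y ^ 2 + 7 * x ^ 2 = 4 * z ^ 3) :
    ∃ a b : ℤ, Odd a ∧ Odd b ∧ IsCoprime a b ∧ ¬ 7 ∣ a ∧ 4 * Y = a * (a ^ 2 - 21 * b ^ 2) := by
  obtain ⟨hx, hY⟩ := odd_and_odd_of_even_sq_add_seven_mul_sq hcop ⟨2 * z ^ 3, by rw [h]; ring⟩
  have h7Y := not_seven_dvd_of_sq_add_seven_mul_sq_eq hcop h
  have hY7x : IsCoprime Y (7 * x) :=
    (Int.prime_seven.coprime_iff_not_dvd.mpr h7Y).symm.mul_right hcop.symm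
  obtain ⟨a, b, ha, hb, hYab, hxab⟩ :=
    KleinInt.exists_of_sq_add_seven_mul_sq_eq_four_mul_cube hx hY hY7x h
  refine ⟨a, b, ha, hb, ?_, fun h7a => h7Y ?_, hYab⟩
  · have hax : IsCoprime a x :=
      ((Int.isCoprime_four_right hx).symm.mul_left hcop.symm).of_isCoprime_of_dvd_left ⟨_, hYab⟩
    exact ((Int.isCoprime_four_right ha).mul_right hax).of_isCoprime_of_dvd_right ⟨_, hxab⟩
  · exact (Int.prime_seven.dvd_mul.mp (hYab ▸ h7a.mul_right _)).resolve_left (by decide)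

theorem exists_odd_mul_sq_sub_mul_sq_eq_four_mul {a b c d : ℤ} (ha : Odd a) (hb : Odd b)
    (hcd : c - d ≡ 4 [ZMOD 8]) : ∃ m, Odd m ∧ c * a ^ 2 - d * b ^ 2 = 4 * m := by
  obtain ⟨i, rfl⟩ := ha
  obtain ⟨j, rfl⟩ := hb
  obtain ⟨e, he⟩ := Int.even_mul_succ_self i
  obtain ⟨f, hf⟩ := Int.even_mul_succ_self j
  obtain ⟨k, hk⟩ := hcd.symm.dvd
  exact ⟨2 * (c * e - d * f + k) + 1, odd_two_mul_add_one _, by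
    linear_combination 4 * c * he - 4 * d * hf + hk⟩

theorem exists_coprime_roots_of_mul_eq_pow {p : ℕ} (hp : Odd p) {a m w b : ℤ} (ha : Odd a)
    (hm : Odd m) (ham : IsCoprime a m) (hab : IsCoprime a b) (hmb : IsCoprime m b)
    (h : a * m = w ^ p) :
    ∃ α β : ℤ, Odd α ∧ Odd β ∧ Int.gcd α β = 1 ∧ Int.gcd α b = 1 ∧ Int.gcd β b = 1 ∧
      α ^ p = a ∧ β ^ p = m ∧ w = α * β := by
  obtain ⟨⟨α, rfl⟩, ⟨β, rfl⟩⟩ := Int.eq_pow_of_mul_eq_pow_odd ham hp h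
  simp only [Int.odd_pow' hp.pos.ne', IsCoprime.pow_left_iff hp.pos,
    IsCoprime.pow_right_iff hp.pos, ← Int.isCoprime_iff_gcd_eq_one] at *
  exact ⟨α, β, ha, hm, ham, hab, hmb, rfl, rfl, hp.pow_inj.mp (by rw [← h, mul_pow])⟩

theorem exists_pow_sub_four_mul_pow_eq_twentyOne_mul_sq {p : ℕ} (hp : Odd p) {y a b : ℤ}
    (ha : Odd a) (hb : Odd b) (hab : IsCoprime a b) (h3 : ¬ 3 ∣ a) (h7 : ¬ 7 ∣ a)
    (hy : 4 * y ^ p = a * (a ^ 2 - 21 * b ^ 2)) :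
    ∃ α β : ℤ, Odd α ∧ Odd β ∧ Int.gcd α β = 1 ∧ Int.gcd α b = 1 ∧ Int.gcd β b = 1 ∧
      α ^ (2 * p) - 4 * β ^ p = 21 * b ^ 2 ∧ y = α * β := by
  obtain ⟨m, hm, hm4⟩ :=
    exists_odd_mul_sq_sub_mul_sq_eq_four_mul (c := 1) (d := 21) ha hb (by decide)
  have ha21 : IsCoprime a (21 * b ^ 2) :=
    ((Int.prime_three.coprime_iff_not_dvd.mpr h3).symm.mul_right
      (Int.prime_seven.coprime_iff_not_dvd.mpr h7).symm).mul_right hab.pow_right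
  have ham : IsCoprime a (4 * m) := by
    rw [← hm4, show 1 * a ^ 2 - 21 * b ^ 2 = -(21 * b ^ 2) + a * a by ring]
    exact ha21.neg_right.add_mul_left_right a
  have hmb : IsCoprime (4 * m) b := by
    rw [← hm4, show 1 * a ^ 2 - 21 * b ^ 2 = a ^ 2 + -21 * b * b by ring]
    exact (hab.pow_left (m := 2)).add_mul_right_left (-21 * b)
  have hprod : a * m = y ^ p :=
    mul_left_cancel₀ four_ne_zero (by linear_combination -a * hm4 - hy)
  obtain ⟨α, β, hα, hβ, hαβ, hαb, hβb, rfl, rfl, rfl⟩ :=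
    exists_coprime_roots_of_mul_eq_pow hp ha hm ham.of_mul_right_right hab
      hmb.of_mul_left_right hprod
  exact ⟨α, β, hα, hβ, hαβ, hαb, hβb, by rw [pow_mul']; linear_combination hm4, rfl⟩

theorem exists_three_pow_mul_pow_sub_four_mul_pow_eq_seven_mul_sq {p : ℕ} (hp : Odd p)
    (hp1 : 1 < p) {y a b : ℤ} (ha : Odd a) (hb : Odd b) (hab : IsCoprime a b) (h3 : 3 ∣ a)
    (h7 : ¬ 7 ∣ a) (hy : 4 * y ^ p = a * (a ^ 2 - 21 * b ^ 2)) :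
    ∃ α β : ℤ, Odd α ∧ Odd β ∧ Int.gcd α β = 1 ∧ Int.gcd α b = 1 ∧ Int.gcd β b = 1 ∧
      3 ^ (2 * p - 3) * α ^ (2 * p) - 4 * β ^ p = 7 * b ^ 2 ∧ y = 3 * α * β := by
  have ha7 : IsCoprime a 7 := (Int.prime_seven.coprime_iff_not_dvd.mpr h7).symm
  obtain ⟨a₀, rfl⟩ := h3
  obtain ⟨m, hm, hm4⟩ := exists_odd_mul_sq_sub_mul_sq_eq_four_mul (c := 3) (d := 7)
    (Int.odd_mul.mp ha).2 hb (by decide)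
  have hy9 : y ^ p = 9 * (a₀ * m) :=
    mul_left_cancel₀ four_ne_zero (by linear_combination hy + 9 * a₀ * hm4)
  obtain ⟨y₀, rfl⟩ : 3 ∣ y :=
    Int.prime_three.dvd_of_dvd_pow ⟨3 * (a₀ * m), by rw [hy9]; ring⟩
  have hy₀ : 3 ^ (p - 2) * y₀ ^ p = a₀ * m := by
    refine mul_left_cancel₀ (by norm_num : (9 : ℤ) ≠ 0) ?_
    rw [← hy9, mul_pow, show p = p - 2 + 2 by omega, pow_add, Nat.add_sub_cancel]
    ring
  have h3b : IsCoprime 3 b := hab.of_isCoprime_of_dvd_left (dvd_mul_right 3 a₀)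
  have h3m : IsCoprime 3 (4 * m) := by
    rw [← hm4, show 3 * a₀ ^ 2 - 7 * b ^ 2 = -(7 * b ^ 2) + 3 * a₀ ^ 2 by ring]
    exact ((Int.isCoprime_iff_gcd_eq_one.mpr rfl : IsCoprime (3 : ℤ) 7).mul_right
      h3b.pow_right).neg_right.add_mul_left_right _
  obtain ⟨a₁, rfl⟩ : 3 ^ (p - 2) ∣ a₀ :=
    h3m.of_mul_right_right.pow_left.dvd_of_dvd_mul_right ⟨y₀ ^ p, hy₀.symm⟩
  set a₀ := 3 ^ (p - 2) * a₁
  have ha₁ : a₁ ∣ 3 * a₀ := dvd_mul_of_dvd_right (dvd_mul_left a₁ _) 3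
  have ham : IsCoprime (3 * a₀) (4 * m) := by
    rw [← hm4, show 3 * a₀ ^ 2 - 7 * b ^ 2 = -(7 * b ^ 2) + 3 * a₀ * a₀ by ring]
    exact (ha7.mul_right hab.pow_right).neg_right.add_mul_left_right _
  have hmb : IsCoprime (4 * m) b := by
    rw [← hm4, show 3 * a₀ ^ 2 - 7 * b ^ 2 = 3 * a₀ ^ 2 + -7 * b * b by ring]
    exact (h3b.mul_left (hab.of_isCoprime_of_dvd_left (dvd_mul_left _ 3)).pow_left
      ).add_mul_right_left _
  have hprod : a₁ * m = y₀ ^ p :=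
    mul_left_cancel₀ (pow_ne_zero (p - 2) three_ne_zero) (by rw [hy₀]; ring)
  obtain ⟨α, β, hα, hβ, hαβ, hαb, hβb, rfl, rfl, rfl⟩ :=
    exists_coprime_roots_of_mul_eq_pow hp (Int.odd_mul.mp (Int.odd_mul.mp ha).2).2 hm
      (ham.of_isCoprime_of_dvd_left ha₁).of_mul_right_right (hab.of_isCoprime_of_dvd_left ha₁)
      hmb.of_mul_left_right hprod
  refine ⟨α, β, hα, hβ, hαβ, hαb, hβb, ?_, by ring⟩
  rw [show 2 * p - 3 = 2 * (p - 2) + 1 by omega, pow_succ, pow_mul', pow_mul' α]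
  linear_combination hm4

theorem reduction_to_signature_2p_p_2
    (p : ℕ) (hp : p.Prime) (hodd : Odd p)
    (x y z : ℤ) (hgcd : Int.gcd x y = 1)
    (heq : 7 * x ^ 2 + y ^ (2 * p) = 4 * z ^ 3) :
    ∃ α β v : ℤ, Odd α ∧ Odd β ∧ Odd v ∧
      Int.gcd α β = 1 ∧ Int.gcd α v = 1 ∧ Int.gcd β v = 1 ∧
      ((α ^ (2 * p) - 4 * β ^ p = 21 * v ^ 2 ∧ y = α * β) ∨
       (3 ^ (2 * p - 3) * α ^ (2 * p) - 4 * β ^ p = 7 * v ^ 2 ∧ y = 3 * α * β)) := by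
  have hcop : IsCoprime x (y ^ p) := (Int.isCoprime_iff_gcd_eq_one.mpr hgcd).pow_right
  obtain ⟨a, b, ha, hb, hab, h7, hy⟩ :=
    exists_odd_coprime_of_sq_add_seven_mul_sq_eq_four_mul_cube (z := z) hcop
      (by linear_combination heq)
  by_cases h3 : 3 ∣ a
  · obtain ⟨α, β, hα, hβ, hαβ, hαb, hβb, heqn, rfl⟩ :=
      exists_three_pow_mul_pow_sub_four_mul_pow_eq_seven_mul_sq hodd hp.one_lt ha hb hab h3 h7 hy
    exact ⟨α, β, b, hα, hβ, hb, hαβ, hαb, hβb, Or.inr ⟨heqn, rfl⟩⟩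
  · obtain ⟨α, β, hα, hβ, hαβ, hαb, hβb, heqn, rfl⟩ :=
      exists_pow_sub_four_mul_pow_eq_twentyOne_mul_sq hodd ha hb hab h3 h7 hy
    exact ⟨α, β, b, hα, hβ, hb, hαβ, hαb, hβb, Or.inl ⟨heqn, rfl⟩⟩
end

section
/- Let p ≥ 5 be a prime. Suppose α, β, v are odd integers with gcd(α, v) = 1, 3 ∤ α, and α^{2p} − 4β^p = 21v^2. Then: (a) β − α^2 is a square modulo 7, i.e. there exists an integer w with β − α^2 ≡ w^2 (mod 7); and (b) 7 ∤ α and β^p ≡ 2·α^{2p} (mod 7). -/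
/-!
Reducing the equation mod 7 gives `β ^ p ≡ 2 α ^ (2p)`, and `7 ∣ α` would force `7 ∣ β` and
then `7 ∣ v`. For the square class of `β - α²`, put `m = α² - β > 0`. Since
`4 ((α²) ^ p - β ^ p) = 3 (α ^ (2p) + 7 v²)` and `m ∣ (α²) ^ p - β ^ p`, Fermat mod 3 gives `3 ∣ m`,
while `3 ∤ α ^ (2p) + 7 v²` gives `9 ∤ m`. So `m = 2 ^ e * 3 * n` with `n` odd and prime to 6;
then `n ∣ α ^ (2p) + 7 v²` and `n` is prime to `7 v`, so `J(-7 | n) = 1`, which by reciprocity is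
`J(n | 7)`. Hence `J(β - α² | 7) = J(-3 | 7) J(2 | 7) ^ e J(n | 7) = 1`.
-/

open scoped NumberTheorySymbols

theorem jacobiSym_neg_eq_of_mod_four_eq_three {q n : ℕ} (hq : q % 4 = 3) (hn : Odd n) :
    J(-q | n) = J(n | q) := by
  rw [neg_eq_neg_one_mul, jacobiSym.mul_left, jacobiSym.at_neg_one hn]
  rcases Nat.odd_mod_four_iff.mp (Nat.odd_iff.mp hn) with hn1 | hn3
  · rw [ZMod.χ₄_nat_one_mod_four hn1, one_mul,
      jacobiSym.quadratic_reciprocity_one_mod_four' (Nat.odd_iff.mpr (by omega)) hn1]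
  · rw [ZMod.χ₄_nat_three_mod_four hn3, jacobiSym.quadratic_reciprocity_three_mod_four hq hn3,
      neg_one_mul, neg_neg]

theorem jacobiSym_eq_one_of_dvd_sq_sub_mul_sq {a x y : ℤ} {n : ℕ}
    (hn : (n : ℤ) ∣ x ^ 2 - a * y ^ 2) (ha : IsCoprime a n) (hy : IsCoprime y n) :
    J(a | n) = 1 := by
  rw [Int.isCoprime_iff_gcd_eq_one] at ha hy
  have hsq : J(a | n) = J(x | n) ^ 2 := by
    rw [← jacobiSym.pow_left, ← mul_one J(a | n), ← jacobiSym.sq_one' hy, ← jacobiSym.mul_left]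
    exact jacobiSym.mod_left' (Int.modEq_iff_dvd.mpr hn)
  rcases jacobiSym.eq_one_or_neg_one ha with h | h
  · exact h
  · nlinarith [sq_nonneg J(x | n)]

theorem exists_dvd_sub_sq_of_jacobiSym_eq_one {q : ℕ} [Fact q.Prime] {a : ℤ} (h : J(a | q) = 1) :
    ∃ w : ℤ, (q : ℤ) ∣ a - w ^ 2 := by
  obtain ⟨r, hr⟩ := ZMod.isSquare_of_jacobiSym_eq_one h
  refine ⟨r.val, ?_⟩
  rw [← ZMod.intCast_zmod_eq_zero_iff_dvd]
  push_cast
  rw [hr, ZMod.natCast_zmod_val, ← sq, sub_self]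

theorem ZMod.pow_eq_self_of_odd (x : ZMod 3) {n : ℕ} (hn : Odd n) : x ^ n = x := by
  obtain ⟨t, rfl⟩ := hn
  induction t with
  | zero => simp
  | succ t ih => rw [show 2 * (t + 1) + 1 = 2 * t + 1 + 2 by ring, pow_add, ih, ← pow_succ',
      ZMod.pow_card]

theorem not_three_dvd_sq_add_seven_mul_sq {x : ℤ} (hx : ¬ (3 : ℤ) ∣ x) (y : ℤ) :
    ¬ (3 : ℤ) ∣ x ^ 2 + 7 * y ^ 2 := by
  rw [← Nat.cast_ofNat (R := ℤ) (n := 3), ← ZMod.intCast_zmod_eq_zero_iff_dvd] at hx ⊢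
  push_cast
  generalize (x : ZMod 3) = a at hx
  generalize (y : ZMod 3) = b
  revert a b
  decide

theorem Nat.exists_eq_two_pow_mul_three_mul {m : ℕ} (hm : m ≠ 0) (h3 : 3 ∣ m) (h9 : ¬ 9 ∣ m) :
    ∃ e n : ℕ, Odd n ∧ ¬ 3 ∣ n ∧ m = 2 ^ e * (3 * n) := by
  obtain ⟨e, k, hk, rfl⟩ := Nat.exists_eq_two_pow_mul_odd hm
  obtain ⟨n, rfl⟩ : 3 ∣ k :=
    (Nat.Coprime.pow_right e (by norm_num : Nat.Coprime 3 2)).dvd_of_dvd_mul_left h3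
  refine ⟨e, n, (Nat.odd_mul.mp hk).2, fun ⟨c, hc⟩ ↦ h9 ⟨2 ^ e * c, by rw [hc]; ring⟩, rfl⟩

def Eq21 (p : ℕ) (α β v : ℤ) : Prop :=
  α ^ (2 * p) - 4 * β ^ p = 21 * v ^ 2

namespace Eq21

variable {p : ℕ} {α β v : ℤ}

theorem seven_dvd_pow_sub_two_mul (h : Eq21 p α β v) : (7 : ℤ) ∣ β ^ p - 2 * α ^ (2 * p) := by
  unfold Eq21 at h
  omega

theorem not_seven_dvd_left (h : Eq21 p α β v) (hp : 2 ≤ p) (hco : IsCoprime α v) :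
    ¬ (7 : ℤ) ∣ α := by
  unfold Eq21 at h
  have h7 : Prime (7 : ℤ) := by norm_num
  intro h7α
  have h7β : (7 : ℤ) ∣ β := by
    have := dvd_pow h7α (show 2 * p ≠ 0 by omega)
    exact h7.dvd_of_dvd_pow (show (7 : ℤ) ∣ β ^ p by omega)
  have h49 : (7 ^ 2 : ℤ) ∣ 21 * v ^ 2 := by
    rw [← h]
    exact dvd_sub ((pow_dvd_pow_of_dvd h7α _).trans (pow_dvd_pow _ (by omega)))
      (((pow_dvd_pow_of_dvd h7β _).trans (pow_dvd_pow _ hp)).mul_left 4)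
  have h7v : (7 : ℤ) ∣ v := by
    have h3v : (7 : ℤ) ∣ 3 * v ^ 2 := by
      obtain ⟨c, hc⟩ := h49
      exact ⟨c, by linarith⟩
    exact h7.dvd_of_dvd_pow ((h7.dvd_or_dvd h3v).resolve_left (by norm_num))
  exact h7.not_isUnit (hco.isUnit_of_dvd' h7α h7v)

theorem four_mul_pow_sub_pow (h : Eq21 p α β v) :
    4 * ((α ^ 2) ^ p - β ^ p) = 3 * (α ^ (2 * p) + 7 * v ^ 2) := by
  unfold Eq21 at h
  rw [← pow_mul]
  linear_combination h

theorem sq_sub_pos (h : Eq21 p α β v) (hp : Odd p) (hv : v ≠ 0) : 0 < α ^ 2 - β := by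
  have hN : 0 < α ^ (2 * p) + 7 * v ^ 2 := by
    rw [pow_mul]
    positivity
  have := h.four_mul_pow_sub_pow
  have : β ^ p < (α ^ 2) ^ p := by linarith
  linarith [(hp.strictMono_pow (R := ℤ)).lt_iff_lt.mp this]

theorem three_dvd_sq_sub (h : Eq21 p α β v) (hp : Odd p) : (3 : ℤ) ∣ α ^ 2 - β := by
  have h3 := congrArg (fun z : ℤ ↦ (z : ZMod 3)) h.four_mul_pow_sub_pow
  rw [← Nat.cast_ofNat (R := ℤ) (n := 3), ← ZMod.intCast_zmod_eq_zero_iff_dvd]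
  push_cast at h3 ⊢
  rwa [ZMod.pow_eq_self_of_odd _ hp, ZMod.pow_eq_self_of_odd _ hp, show (4 : ZMod 3) = 1 by decide,
    show (3 : ZMod 3) = 0 by decide, one_mul, zero_mul] at h3

theorem not_nine_dvd_sq_sub (h : Eq21 p α β v) (h3 : ¬ (3 : ℤ) ∣ α) : ¬ (9 : ℤ) ∣ α ^ 2 - β := by
  intro h9
  have h9N := (h9.trans (sub_dvd_pow_sub_pow _ _ p)).mul_left 4
  rw [h.four_mul_pow_sub_pow, pow_mul'] at h9N
  exact not_three_dvd_sq_add_seven_mul_sq (mt (Int.prime_three.dvd_of_dvd_pow (n := p)) h3) v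
    (by omega)

theorem not_seven_dvd_sq_sub (h : Eq21 p α β v) (h7 : ¬ (7 : ℤ) ∣ α) : ¬ (7 : ℤ) ∣ α ^ 2 - β := by
  intro h7m
  have h7M := h7m.trans (sub_dvd_pow_sub_pow _ _ p)
  rw [← pow_mul] at h7M
  have := h.seven_dvd_pow_sub_two_mul
  exact h7 ((show Prime (7 : ℤ) by norm_num).dvd_of_dvd_pow (n := 2 * p) (by omega))

theorem dvd_of_dvd_sq_sub (h : Eq21 p α β v) {n : ℤ} (hn : n ∣ α ^ 2 - β) (hn3 : IsCoprime n 3) :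
    n ∣ α ^ (2 * p) + 7 * v ^ 2 :=
  hn3.dvd_of_dvd_mul_left <| h.four_mul_pow_sub_pow ▸
    ((hn.trans (sub_dvd_pow_sub_pow _ _ p)).mul_left 4)

theorem jacobiSym_sub_sq_seven (h : Eq21 p α β v) (hp : Odd p) (hv : v ≠ 0)
    (hco : IsCoprime α v) (h3 : ¬ (3 : ℤ) ∣ α) (h7 : ¬ (7 : ℤ) ∣ α) : J(β - α ^ 2 | 7) = 1 := by
  have hm := h.sq_sub_pos hp hv
  obtain ⟨e, n, hn, hn3, hmn⟩ := Nat.exists_eq_two_pow_mul_three_mul (by omega)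
    (Int.natAbs_dvd_natAbs.mpr (h.three_dvd_sq_sub hp))
    (fun h9 ↦ h.not_nine_dvd_sq_sub h3 (Int.natAbs_dvd_natAbs.mp h9))
  have hm_eq : α ^ 2 - β = 2 ^ e * 3 * n := by
    rw [← Int.natAbs_of_nonneg hm.le, hmn]
    push_cast
    ring
  have hnm : (n : ℤ) ∣ α ^ 2 - β := hm_eq ▸ dvd_mul_left _ _
  have hnN : (n : ℤ) ∣ α ^ (2 * p) + 7 * v ^ 2 :=
    h.dvd_of_dvd_sq_sub hnm (Int.prime_three.coprime_iff_not_dvd.mpr (by exact_mod_cast hn3)).symm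
  have hn7 : IsCoprime (7 : ℤ) n :=
    (show Prime (7 : ℤ) by norm_num).coprime_iff_not_dvd.mpr
      fun h7n ↦ h.not_seven_dvd_sq_sub h7 (h7n.trans hnm)
  have hvn : IsCoprime v n := by
    have hNv := (hco.pow_left (m := 2 * p)).add_mul_left_left (7 * v)
    rw [← mul_assoc, mul_comm v 7, mul_assoc, ← sq] at hNv
    exact (hNv.of_isCoprime_of_dvd_left hnN).symm
  have hJn : J(-7 | n) = 1 :=
    jacobiSym_eq_one_of_dvd_sq_sub_mul_sq (x := α ^ p)
      (by rwa [← pow_mul', neg_mul, sub_neg_eq_add]) hn7.neg_left hvn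
  have hJ7 : J(n | 7) = 1 := by
    rw [← hJn, ← jacobiSym_neg_eq_of_mod_four_eq_three (by norm_num) hn, Nat.cast_ofNat]
  rw [show β - α ^ 2 = -3 * 2 ^ e * n by linarith, jacobiSym.mul_left, jacobiSym.mul_left,
    jacobiSym.pow_left, hJ7]
  norm_num

end Eq21

theorem congruences_mod_7_for_d_eq_1_general
    (p : ℕ) (hp : p.Prime) (hp5 : 5 ≤ p)
    (α β v : ℤ) (hv : Odd v)
    (hgcd : Int.gcd α v = 1) (h3 : ¬ (3 : ℤ) ∣ α)
    (heq : α ^ (2 * p) - 4 * β ^ p = 21 * v ^ 2) :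
    (∃ w : ℤ, (7 : ℤ) ∣ (β - α ^ 2 - w ^ 2)) ∧
    ¬ (7 : ℤ) ∣ α ∧ (7 : ℤ) ∣ (β ^ p - 2 * α ^ (2 * p)) := by
  have hsol : Eq21 p α β v := heq
  have hco : IsCoprime α v := Int.isCoprime_iff_gcd_eq_one.mpr hgcd
  have h7 : ¬ (7 : ℤ) ∣ α := hsol.not_seven_dvd_left hp.two_le hco
  have hJ : J(β - α ^ 2 | 7) = 1 :=
    hsol.jacobiSym_sub_sq_seven (hp.odd_of_ne_two (by omega)) (by rintro rfl; simp at hv) hco h3 h7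
  have : Fact (Nat.Prime 7) := ⟨by norm_num⟩
  exact ⟨exists_dvd_sub_sq_of_jacobiSym_eq_one hJ, h7, hsol.seven_dvd_pow_sub_two_mul⟩

theorem congruences_mod_7_for_d_eq_1
    (p : ℕ) (hp : p.Prime) (hp5 : 5 ≤ p)
    (α β v : ℤ) (hα : Odd α) (hβ : Odd β) (hv : Odd v)
    (hgcd : Int.gcd α v = 1) (h3 : ¬ (3 : ℤ) ∣ α)
    (heq : α ^ (2 * p) - 4 * β ^ p = 21 * v ^ 2) :
    (∃ w : ℤ, (7 : ℤ) ∣ (β - α ^ 2 - w ^ 2)) ∧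
    ¬ (7 : ℤ) ∣ α ∧ (7 : ℤ) ∣ (β ^ p - 2 * α ^ (2 * p)) :=
  congruences_mod_7_for_d_eq_1_general p hp hp5 α β v hv hgcd h3 heq
end
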